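/- Let T_k be the tree consisting of a root v_0 with children v_{1,1},...,v_{1,g(k)} forming layer 1, where each layer-i vertex v_{i,j} (1 ≤ i ≤ k) has a unique child v_{i+1,j}, so that layers 1 through k+1 each have g(k) vertices arranged in g(k) paths hanging from the root's children; here g is defined by g(1)=2 and g(k) = ((k+1)/2)·(g(k-2)-1)+1 for odd k ≥ 3. Let G_k = T_k^[k] and let G_k' be obtained from G_k by completing both sides of its bipartition into cliques. Then box(G_k') > (k+1)/2. -/

import Mathlib

open SimpleGraph Set

/-- `f` given by endpoint functions `a`, `b` is an interval representation of `I`. -/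
def IsIntervalRep {V : Type*} (I : SimpleGraph V) (a b : V → ℝ) : Prop :=
  (∀ v, a v ≤ b v) ∧
    ∀ u v, I.Adj u v ↔ u ≠ v ∧ (Set.Icc (a u) (b u) ∩ Set.Icc (a v) (b v)).Nonempty

/-- `I` is an interval graph. -/
def IsIntervalGraph {V : Type*} (I : SimpleGraph V) : Prop :=
  ∃ a b : V → ℝ, IsIntervalRep I a b

/-- `G` is the intersection graph of axis-parallel `k`-dimensional boxes. -/
def IsBoxRep {V : Type*} (G : SimpleGraph V) (k : ℕ) : Prop :=
  ∃ lo hi : V → Fin k → ℝ, (∀ v i, lo v i ≤ hi v i) ∧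
    ∀ u v, G.Adj u v ↔ u ≠ v ∧
      ∀ i, (Set.Icc (lo u i) (hi u i) ∩ Set.Icc (lo v i) (hi v i)).Nonempty

/-- The boxicity of a graph: the least `k` such that `G` is an intersection graph of
axis-parallel `k`-dimensional boxes. -/
noncomputable def boxicity {V : Type*} (G : SimpleGraph V) : ℕ :=
  sInf {k | IsBoxRep G k}

/-- The `k`-th bipartite power of `G`: join vertices at odd distance at most `k`. -/
def bipartitePower {V : Type*} (G : SimpleGraph V) (k : ℕ) : SimpleGraph V :=
  SimpleGraph.fromRel (fun u v => Odd (G.dist u v) ∧ G.dist u v ≤ k)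

/-- Add to `G` all edges between distinct vertices of `B`. -/
def addCliqueOn {V : Type*} (G : SimpleGraph V) (B : Set V) : SimpleGraph V :=
  SimpleGraph.fromRel (fun u v => G.Adj u v ∨ (u ∈ B ∧ v ∈ B))

/-- `{A, B}` is a bipartition of `G`. -/
def IsBipartitionOf {V : Type*} (G : SimpleGraph V) (A B : Set V) : Prop :=
  Disjoint A B ∧ A ∪ B = Set.univ ∧ ∀ u v, G.Adj u v → (u ∈ A ↔ v ∈ B)

/-- `G` has no induced cycle of length greater than `m`. -/
def HasNoInducedCycleGT {V : Type*} (G : SimpleGraph V) (m : ℕ) : Prop :=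
  ∀ n : ℕ, m < n → IsEmpty (SimpleGraph.cycleGraph n ↪g G)

/-- Chordal bipartite graphs: bipartite with no induced cycle of length > 4. -/
def ChordalBipartite {V : Type*} (G : SimpleGraph V) : Prop :=
  (∃ A B : Set V, IsBipartitionOf G A B) ∧ HasNoInducedCycleGT G 4

/-- The closed neighbourhood `N[v]`. -/
def closedNbhd {V : Type*} (G : SimpleGraph V) (v : V) : Set V :=
  insert v (G.neighborSet v)

/-- Two vertices are compatible if one closed neighbourhood contains the other. -/
def Compatible {V : Type*} (G : SimpleGraph V) (u v : V) : Prop :=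
  closedNbhd G u ⊆ closedNbhd G v ∨ closedNbhd G v ⊆ closedNbhd G u

/-- A vertex is simple if all pairs in its closed neighbourhood are compatible. -/
def IsSimpleVertex {V : Type*} (G : SimpleGraph V) (v : V) : Prop :=
  ∀ x ∈ closedNbhd G v, ∀ y ∈ closedNbhd G v, Compatible G x y

/-- The function `g` with `g 1 = 2` and `g k = ((k+1)/2) * (g (k-2) - 1) + 1` for odd `k ≥ 3`. -/
def g : ℕ → ℕ
  | 0 => 1
  | 1 => 2
  | (n + 2) => ((n + 3) / 2) * (g n - 1) + 1

/-- Vertices of the tree `T_k`: the root `none`, and `some (i, j)` for the `j`-th vertex of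
layer `i + 1`, for `i < k + 1` and `j < g k`. -/
abbrev TkVert (k : ℕ) : Type := Option (Fin (k + 1) × Fin (g k))

/-- The tree `T_k`: the root is adjacent to all of layer 1, and `v_{i,j}` is adjacent to
`v_{i+1,j}`. -/
def Tk (k : ℕ) : SimpleGraph (TkVert k) :=
  SimpleGraph.fromRel (fun u v =>
    (∃ j, u = none ∧ v = some (0, j)) ∨
    (∃ (i i' : Fin (k + 1)) (j : Fin (g k)),
      (i' : ℕ) = (i : ℕ) + 1 ∧ u = some (i, j) ∧ v = some (i', j)))

/-- The side `A` of the bipartition of `T_k`: the vertices in odd-numbered layers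
(the root being in layer 0, and `some (i, j)` in layer `i + 1`). -/
def TkA (k : ℕ) : Set (TkVert k) :=
  {v | ∃ (i : Fin (k + 1)) (j : Fin (g k)), v = some (i, j) ∧ Even (i : ℕ)}

/-!
Write `k = 2m + 1`. For levels `s ≤ m` and paths `i`, let `a_s(i) = v_{2(m-s)+1,i} ∈ A` and
`b_s(i) = v_{2s+2,i} ∈ B`. Distances in `T_k` show that `a_s(i)` and `b_{s'}(j)` are adjacent in
`G_k'` iff `i = j` or `s' < s`. In a representation by `d` boxes, every non-edge `a_s(i) b_s(j)`
(`i ≠ j`) is separated by some coordinate. Since interval graphs contain no induced `C₄`, in a fixed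
coordinate these separations are antisymmetric in `(i, j)`, and along a chain `h, i, j` the level
at which `(h, i)` is separated is at most the level at which `(i, j)` is. Induction on the number
of levels, removing for each coordinate the paths it separates at the top level, then shows that
`n` levels and at most `n` coordinates allow at most `n!` paths; but `T_k` has `m + 1` levels and
`g(k) = (m + 1)! + 1` paths.
-/

open scoped Nat

theorem Set.Icc_inter_Icc_nonempty_iff {α : Type*} [LinearOrder α] {a b c d : α} :
    (Icc a b ∩ Icc c d).Nonempty ↔ a ≤ b ∧ a ≤ d ∧ c ≤ b ∧ c ≤ d := by
  rw [Icc_inter_Icc, nonempty_Icc, sup_le_iff, le_inf_iff, le_inf_iff]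
  tauto

theorem Set.Icc_inter_nonempty_of_four_cycle {α : Type*} [LinearOrder α]
    {x₁ x₂ y₁ y₂ z₁ z₂ w₁ w₂ : α}
    (hxz : (Icc x₁ x₂ ∩ Icc z₁ z₂).Nonempty) (hzy : (Icc z₁ z₂ ∩ Icc y₁ y₂).Nonempty)
    (hyw : (Icc y₁ y₂ ∩ Icc w₁ w₂).Nonempty) (hwx : (Icc w₁ w₂ ∩ Icc x₁ x₂).Nonempty) :
    (Icc x₁ x₂ ∩ Icc y₁ y₂).Nonempty ∨ (Icc z₁ z₂ ∩ Icc w₁ w₂).Nonempty := by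
  simp only [Icc_inter_Icc_nonempty_iff] at *
  obtain ⟨_, _, _, _⟩ := hxz
  obtain ⟨_, _, _, _⟩ := hzy
  obtain ⟨_, _, _, _⟩ := hyw
  obtain ⟨_, _, _, _⟩ := hwx
  rcases le_or_gt x₁ y₂ with h₁ | h₁ <;> rcases le_or_gt y₁ x₂ with h₂ | h₂
  · left; refine ⟨?_, ?_, ?_, ?_⟩ <;> order
  all_goals right; refine ⟨?_, ?_, ?_, ?_⟩ <;> order

/- In coordinate `w` the vertex `w` gets `{0}`, its neighbours `[0, 1]` and all other vertices
`{1}`, so the only pairs separated there are the non-edges at `w`. -/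
theorem isBoxRep_natCard {V : Type*} [Finite V] (G : SimpleGraph V) :
    IsBoxRep G (Nat.card V) := by
  classical
  let w : Fin (Nat.card V) → V := (Finite.equivFin V).symm
  refine ⟨fun v c => if v = w c ∨ G.Adj (w c) v then 0 else 1,
    fun v c => if v = w c then 0 else 1, fun v c => by dsimp only; split_ifs <;> simp_all,
    fun u v => ?_⟩
  simp only [Set.Icc_inter_Icc_nonempty_iff]
  constructor
  · intro huv
    refine ⟨huv.ne, fun c => ?_⟩
    have := huv.symm
    split_ifs <;> simp_all
  · rintro ⟨huv, hmeet⟩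
    have := (hmeet (Finite.equivFin V u)).2.2.1
    simp only [w, Equiv.symm_apply_apply] at this
    split_ifs at this with h
    · exact h.resolve_left (Ne.symm huv)
    · norm_num at this

theorem lt_boxicity {V : Type*} [Finite V] {G : SimpleGraph V} {n : ℕ}
    (h : ∀ d, IsBoxRep G d → n < d) : n < boxicity G :=
  h _ (Nat.sInf_mem (s := {d | IsBoxRep G d}) ⟨_, isBoxRep_natCard G⟩)

theorem addCliqueOn_adj {V : Type*} {G : SimpleGraph V} {B : Set V} {u v : V} :
    (addCliqueOn G B).Adj u v ↔ G.Adj u v ∨ u ≠ v ∧ u ∈ B ∧ v ∈ B := by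
  have : G.Adj u v → u ≠ v := Adj.ne
  simp only [addCliqueOn, fromRel_adj, G.adj_comm v u]
  tauto

def completeSides {V : Type*} (H : SimpleGraph V) (A : Set V) : SimpleGraph V :=
  addCliqueOn (addCliqueOn H A) Aᶜ

theorem completeSides_adj {V : Type*} {H : SimpleGraph V} {A : Set V} {u v : V} :
    (completeSides H A).Adj u v ↔ H.Adj u v ∨ u ≠ v ∧ (u ∈ A ↔ v ∈ A) := by
  simp only [completeSides, addCliqueOn_adj, mem_compl_iff]
  tauto

theorem bipartitePower_adj {V : Type*} {G : SimpleGraph V} {k : ℕ} {u v : V} :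
    (bipartitePower G k).Adj u v ↔ Odd (G.dist u v) ∧ G.dist u v ≤ k := by
  simp only [bipartitePower, fromRel_adj, dist_comm (u := v), or_self, and_iff_right_iff_imp]
  rintro h rfl
  simp at h

theorem SimpleGraph.Walk.abs_sub_le_length {V : Type*} {G : SimpleGraph V} {f : V → ℤ}
    (hf : ∀ ⦃u v⦄, G.Adj u v → |f u - f v| ≤ 1) {u v : V} (p : G.Walk u v) :
    |f u - f v| ≤ p.length := by
  induction p with
  | nil => simp
  | @cons a b c h p ih =>
    rw [length_cons, Nat.cast_succ]
    linarith [abs_sub_le (f a) (f b) (f c), hf h]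

theorem SimpleGraph.Reachable.abs_sub_le_dist {V : Type*} {G : SimpleGraph V} {f : V → ℤ}
    (hf : ∀ ⦃u v⦄, G.Adj u v → |f u - f v| ≤ 1) {u v : V} (h : G.Reachable u v) :
    |f u - f v| ≤ G.dist u v := by
  obtain ⟨p, hp⟩ := h.exists_walk_length_eq_dist
  exact hp ▸ p.abs_sub_le_length hf

theorem card_le_factorial_of_separations {ι α : Type*} (n : ℕ)
    (K : ι → Fin (n + 1) → α → α → Prop)
    (asymm : ∀ c s s' i j, K c s i j → ¬ K c s' j i)
    (mono : ∀ c s s' h i j, K c s' h i → K c s i j → s' ≤ s)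
    (C : Finset ι) (hC : C.card ≤ n + 1) (S : Finset α)
    (cover : ∀ i ∈ S, ∀ j ∈ S, i ≠ j → ∀ s, ∃ c ∈ C, K c s i j) :
    S.card ≤ (n + 1)! := by
  induction n generalizing C S with
  | zero =>
    refine Finset.card_le_one.2 fun i hi j hj => by_contra fun hij => ?_
    obtain ⟨c, hc, hK⟩ := cover i hi j hj hij 0
    obtain ⟨c', hc', hK'⟩ := cover j hj i hi (Ne.symm hij) 0
    exact asymm c 0 0 i j hK (Finset.card_le_one.1 hC c hc c' hc' ▸ hK')
  | succ n ih =>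
    classical
    rcases le_or_gt S.card 1 with hS | hS
    · exact hS.trans (Nat.factorial_pos _)
    let T c := S.filter fun j => ∃ i, K c (Fin.last _) i j
    have hST : S ⊆ C.biUnion T := by
      intro j hj
      obtain ⟨i, hi, hij⟩ := Finset.exists_mem_ne hS j
      obtain ⟨c, hc, hK⟩ := cover i hi j hj hij (Fin.last _)
      exact Finset.mem_biUnion.2 ⟨c, hc, Finset.mem_filter.2 ⟨hj, i, hK⟩⟩
    -- By `mono`, pairs inside `T c` are never separated by `c` below the top level.
    have hT : ∀ c ∈ C, (T c).card ≤ (n + 1)! := by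
      intro c hc
      refine ih (fun c s => K c s.castSucc) (fun c s s' => asymm c _ _)
        (fun c s s' h i j h₁ h₂ => Fin.castSucc_le_castSucc_iff.1 (mono c _ _ h i j h₁ h₂))
        (C.erase c) (by rw [Finset.card_erase_of_mem hc]; omega) (T c) ?_
      intro i hi j hj hij s
      obtain ⟨c', hc', hK⟩ := cover i (Finset.mem_filter.1 hi).1 j (Finset.mem_filter.1 hj).1 hij
        s.castSucc
      refine ⟨c', Finset.mem_erase.2 ⟨?_, hc'⟩, hK⟩
      rintro rfl
      obtain ⟨h, hh⟩ := (Finset.mem_filter.1 hi).2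
      exact (Fin.castSucc_lt_last s).not_ge (mono c' _ _ h i j hh hK)
    calc S.card ≤ (C.biUnion T).card := Finset.card_le_card hST
      _ ≤ ∑ c ∈ C, (T c).card := Finset.card_biUnion_le
      _ ≤ C.card * (n + 1)! := Finset.sum_le_card_nsmul _ _ _ hT
      _ ≤ (n + 2) * (n + 1)! := Nat.mul_le_mul_right _ hC
      _ = (n + 2)! := (Nat.factorial_succ _).symm

theorem g_two_mul_add_one (m : ℕ) : g (2 * m + 1) = (m + 1)! + 1 := by
  induction m with
  | zero => rfl
  | succ m ih =>
    rw [show 2 * (m + 1) + 1 = 2 * m + 1 + 2 by ring, g, ih, Nat.factorial_succ (m + 1)]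
    congr 2
    omega

namespace Tk

variable {k : ℕ}

theorem adj_root (j : Fin (g k)) : (Tk k).Adj none (some (0, j)) := by
  simp [Tk, fromRel_adj]

theorem adj_castSucc_succ (a : Fin k) (j : Fin (g k)) :
    (Tk k).Adj (some (a.castSucc, j)) (some (a.succ, j)) := by
  simp only [Tk, fromRel_adj]
  exact ⟨by simp [Fin.ext_iff], Or.inl (Or.inr ⟨_, _, j, rfl, rfl, rfl⟩)⟩

theorem reachable_root (a : Fin (k + 1)) (j : Fin (g k)) :
    (Tk k).Reachable none (some (a, j)) := by
  induction a using Fin.induction with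
  | zero => exact (adj_root j).reachable
  | succ a ih => exact ih.trans (adj_castSucc_succ a j).reachable

theorem connected (k : ℕ) : (Tk k).Connected :=
  (connected_iff_exists_forall_reachable _).2 ⟨none, by
    rintro (_ | ⟨a, j⟩)
    exacts [Reachable.refl _, reachable_root a j]⟩

/- A signed depth, changing by one along every edge: it gives the lower bounds on distances. -/
def potential (i : Fin (g k)) : TkVert k → ℤ
  | none => 0
  | some (a, j) => if j = i then a + 1 else -(a + 1)

theorem abs_potential_sub_le_one (i : Fin (g k)) ⦃u v : TkVert k⦄ (h : (Tk k).Adj u v) :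
    |potential i u - potential i v| ≤ 1 := by
  simp only [Tk, fromRel_adj] at h
  rw [abs_le]
  rcases h.2 with (⟨j, rfl, rfl⟩ | ⟨a, b, j, hab, rfl, rfl⟩) |
      (⟨j, rfl, rfl⟩ | ⟨a, b, j, hab, rfl, rfl⟩) <;>
    simp only [potential] <;> split_ifs <;> simp <;> omega

theorem dist_le_sub {a b : Fin (k + 1)} (hab : a ≤ b) (j : Fin (g k)) :
    (Tk k).dist (some (a, j)) (some (b, j)) ≤ b - a := by
  induction b using Fin.induction with
  | zero => simp [Fin.le_zero_iff.1 hab]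
  | succ b ih =>
    rcases hab.eq_or_lt with rfl | hlt
    · simp
    · have htri := (connected k).dist_triangle (u := some (a, j)) (v := some (b.castSucc, j))
        (w := some (b.succ, j))
      rw [dist_eq_one_iff_adj.2 (adj_castSucc_succ b j)] at htri
      have := ih (Fin.le_castSucc_iff.2 hlt)
      simp only [Fin.val_castSucc, Fin.val_succ] at htri this ⊢
      rw [Fin.lt_def, Fin.val_succ] at hlt
      omega

theorem dist_root (a : Fin (k + 1)) (j : Fin (g k)) :
    (Tk k).dist none (some (a, j)) = a + 1 := by
  refine le_antisymm ?_ ?_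
  · calc (Tk k).dist none (some (a, j))
        ≤ (Tk k).dist none (some (0, j)) + (Tk k).dist (some (0, j)) (some (a, j)) :=
          (connected k).dist_triangle
      _ ≤ 1 + (a - 0 : ℕ) := add_le_add (dist_eq_one_iff_adj.2 (adj_root j)).le
          (dist_le_sub (Fin.zero_le a) j)
      _ = a + 1 := by simp [add_comm]
  · have := (reachable_root a j).abs_sub_le_dist (abs_potential_sub_le_one j)
    simp only [potential, if_true, abs_le] at this
    omega

theorem dist_same_path (a b : Fin (k + 1)) (j : Fin (g k)) :
    (Tk k).dist (some (a, j)) (some (b, j)) = max (a : ℕ) b - min (a : ℕ) b := by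
  refine le_antisymm ?_ ?_
  · rcases le_total a b with hab | hab
    · have := dist_le_sub hab j
      omega
    · have := dist_le_sub hab j
      rw [dist_comm]
      omega
  · have := ((connected k) (some (a, j)) (some (b, j))).abs_sub_le_dist
      (abs_potential_sub_le_one j)
    simp only [potential, if_true, abs_le] at this
    omega

theorem dist_of_ne {i j : Fin (g k)} (hij : i ≠ j) (a b : Fin (k + 1)) :
    (Tk k).dist (some (a, i)) (some (b, j)) = a + b + 2 := by
  refine le_antisymm ?_ ?_
  · have := (connected k).dist_triangle (u := some (a, i)) (v := none) (w := some (b, j))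
    have hi := dist_root a i
    rw [dist_comm] at hi
    have hj := dist_root b j
    omega
  · have := ((connected k) (some (a, i)) (some (b, j))).abs_sub_le_dist
      (abs_potential_sub_le_one i)
    simp only [potential, if_true, hij.symm, if_false, abs_le] at this
    omega

abbrev completedPower (k : ℕ) : SimpleGraph (TkVert k) :=
  completeSides (bipartitePower (Tk k) k) (TkA k)

variable {m : ℕ}

/- In the notation of the paper, `vertA s i = v_{2(m-s)+1, i}` and `vertB s j = v_{2s+2, j}`. -/
def vertA (s : Fin (m + 1)) (i : Fin (g (2 * m + 1))) : TkVert (2 * m + 1) :=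
  some (⟨2 * (m - s), by omega⟩, i)

def vertB (s : Fin (m + 1)) (j : Fin (g (2 * m + 1))) : TkVert (2 * m + 1) :=
  some (⟨2 * s + 1, by omega⟩, j)

theorem vertA_mem (s : Fin (m + 1)) (i : Fin (g (2 * m + 1))) : vertA s i ∈ TkA (2 * m + 1) :=
  ⟨_, i, rfl, even_two_mul _⟩

theorem vertB_not_mem (s : Fin (m + 1)) (j : Fin (g (2 * m + 1))) :
    vertB s j ∉ TkA (2 * m + 1) := by
  rintro ⟨a, j', h, ha⟩
  simp only [vertB, Option.some.injEq, Prod.mk.injEq] at h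
  rw [← h.1] at ha
  simp at ha

theorem vertA_adj_vertA {s s' : Fin (m + 1)} {i j : Fin (g (2 * m + 1))} (hij : i ≠ j) :
    (completedPower (2 * m + 1)).Adj (vertA s i) (vertA s' j) :=
  completeSides_adj.2 <| Or.inr ⟨by simp [vertA, hij], iff_of_true (vertA_mem s i) (vertA_mem s' j)⟩

theorem vertB_adj_vertB {s s' : Fin (m + 1)} {i j : Fin (g (2 * m + 1))} (hij : i ≠ j) :
    (completedPower (2 * m + 1)).Adj (vertB s i) (vertB s' j) :=
  completeSides_adj.2 <| Or.inr ⟨by simp [vertB, hij],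
    iff_of_false (vertB_not_mem s i) (vertB_not_mem s' j)⟩

theorem vertA_adj_vertB_iff {s s' : Fin (m + 1)} {i j : Fin (g (2 * m + 1))} :
    (completedPower (2 * m + 1)).Adj (vertA s i) (vertB s' j) ↔ i = j ∨ s' < s := by
  simp only [completeSides_adj, bipartitePower_adj, vertA_mem, vertB_not_mem, iff_false,
    not_true, and_false, or_false, Nat.odd_iff, Fin.lt_def]
  rcases eq_or_ne i j with rfl | hij
  · simp only [vertA, vertB, dist_same_path, true_or, iff_true]
    omega
  · simp only [vertA, vertB, dist_of_ne hij, hij, false_or]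
    omega

theorem not_isBoxRep_completedPower {d : ℕ} (hd : d ≤ m + 1) :
    ¬ IsBoxRep (completedPower (2 * m + 1)) d := by
  set G := completedPower (2 * m + 1)
  rintro ⟨lo, hi, -, hrep⟩
  let box : TkVert (2 * m + 1) → Fin d → Set ℝ := fun v c => Icc (lo v c) (hi v c)
  let K : Fin d → Fin (m + 1) → Fin (g (2 * m + 1)) → Fin (g (2 * m + 1)) → Prop :=
    fun c s i j => ¬ (box (vertA s i) c ∩ box (vertB s j) c).Nonempty
  have meet {u v} (h : G.Adj u v) (c : Fin d) : (box u c ∩ box v c).Nonempty :=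
    ((hrep u v).1 h).2 c
  have four_cycle {x y z w} (c : Fin d) (hxz : G.Adj x z) (hzy : G.Adj z y) (hyw : G.Adj y w)
      (hwx : G.Adj w x) : (box x c ∩ box y c).Nonempty ∨ (box z c ∩ box w c).Nonempty :=
    Icc_inter_nonempty_of_four_cycle (meet hxz c) (meet hzy c) (meet hyw c) (meet hwx c)
  have ne_of_K {c s i j} (h : K c s i j) : i ≠ j := by
    rintro rfl
    exact h (meet (vertA_adj_vertB_iff.2 (Or.inl rfl)) c)
  have asymm c s s' i j (h₁ : K c s i j) (h₂ : K c s' j i) : False := by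
    have hij := ne_of_K h₁
    exact (four_cycle c (vertA_adj_vertA hij) (vertA_adj_vertB_iff.2 (Or.inl rfl))
      (vertB_adj_vertB hij.symm) (vertA_adj_vertB_iff.2 (Or.inl rfl)).symm).elim h₁ h₂
  have mono c s s' h i j (h₁ : K c s' h i) (h₂ : K c s i j) : s' ≤ s := by
    by_contra! hlt
    exact (four_cycle c (vertA_adj_vertA (ne_of_K h₁)) (vertA_adj_vertB_iff.2 (Or.inl rfl))
      (vertB_adj_vertB (ne_of_K h₂)) (vertA_adj_vertB_iff.2 (Or.inr hlt)).symm).elim h₁ h₂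
  have cover i j (hij : i ≠ j) s : ∃ c, K c s i j := by
    by_contra! h
    have hne : vertA s i ≠ vertB s j := fun he => vertB_not_mem s j (he ▸ vertA_mem s i)
    exact vertA_adj_vertB_iff.not.2 (by simp [hij]) ((hrep _ _).2 ⟨hne, fun c => not_not.1 (h c)⟩)
  have := card_le_factorial_of_separations m K asymm mono Finset.univ (by simpa) Finset.univ
    fun i _ j _ hij s => by simpa using cover i j hij s
  simp [g_two_mul_add_one] at this

end Tk

theorem stmt9 (k : ℕ) (hk : Odd k) :
    (k + 1) / 2 <
      boxicity (addCliqueOn (addCliqueOn (bipartitePower (Tk k) k) (TkA k)) (TkA k)ᶜ) := by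
  obtain ⟨m, rfl⟩ := hk
  rw [show (2 * m + 1 + 1) / 2 = m + 1 by omega]
  exact lt_boxicity fun d hd => lt_of_not_ge fun hdm => Tk.not_isBoxRep_completedPower hdm hd
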